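/- arXiv:2105.09513 — 2 statements merged into one kernel-verified Lean document; each statement's English description precedes it below -/
import Mathlib

section
/- Stability of the least singular value along a trajectory: let φ_1, …, φ_K : ℝ → ℝ be bounded by B and B-Lipschitz on ℝ, fix c ∈ ℝ^N and data x̃_1, …, x̃_m with K ≥ m, and for Θ = (α, V) define the K×m matrix A(Θ) by A(Θ)_{kj} = Σ_{i=1}^N c_i α_k φ_k(v_iᵀ x̃_j). Let C = √(1 + (max_j ‖x̃_j‖ · ‖α‖_∞)²) · ‖c‖_1 · B · √(K m), and let λ0 = σ_min(A(Θ(0))) where σ_min is the m-th largest singular value. If a parameter path Θ(t) satisfies ‖Θ(t) − Θ(0)‖_F ≤ λ0 / (2C) for all t ∈ [0, T], then σ_min(A(Θ(t))) ≥ λ0 / 2 for all t ∈ [0, T]. -/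
/-!
Perturbing `Θ(0)` by `δ = ‖Θ(t) - Θ(0)‖_F` moves each entry of `A` by at most
`√(1 + L²) ‖c‖₁ B δ`, where `L = max_j ‖x̃_j‖ ‖α(0)‖_∞`: the change in `α_k` costs `B |Δα_k|`
because `φ_k` is bounded, the change in `v_i` costs `|α_k(0)| B ‖x̃_j‖ ‖Δv_i‖` because `φ_k` is
Lipschitz, and Cauchy–Schwarz merges the two. An entrywise bound `b` on a `K × m` matrix bounds
its operator norm by `√(Km) b`, so `‖(A(Θ(0)) - A(Θ(t))) x‖ ≤ C δ ‖x‖ ≤ λ₀/2 ‖x‖`, and the least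
singular value, an infimum of `‖A x‖` over unit vectors, drops by at most `λ₀ / 2`.
-/

open scoped BigOperators

noncomputable section

/-- Euclidean norm of a finitely-indexed real vector. -/
def euclNorm {ι : Type*} [Fintype ι] (u : ι → ℝ) : ℝ := Real.sqrt (∑ i, (u i) ^ 2)

/-- For a `K × m` real matrix with `K ≥ m`, the `m`-th largest (i.e. least) singular value,
characterized as the infimum of `‖A x‖` over Euclidean unit vectors `x ∈ ℝ^m`. -/
def sigmaMin {K m : ℕ} (A : Matrix (Fin K) (Fin m) ℝ) : ℝ :=
  ⨅ x : {x : Fin m → ℝ // euclNorm x = 1}, euclNorm (A.mulVec x)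

/-- The matrix `A(Θ)_{kj} = Σ_i c_i α_k φ_k(v_iᵀ x̃_j)` for parameters `Θ = (α, V)`. -/
def featMat {N d K m : ℕ} (φ : Fin K → ℝ → ℝ) (c : Fin N → ℝ)
    (xt : Fin m → Fin (d + 1) → ℝ) (α : Fin K → ℝ) (V : Fin N → Fin (d + 1) → ℝ) :
    Matrix (Fin K) (Fin m) ℝ :=
  Matrix.of fun k j => ∑ i, c i * α k * φ k (∑ l, V i l * xt j l)

open Matrix

section EuclNorm

variable {ι κ : Type*} [Fintype ι] [Fintype κ]

lemma euclNorm_nonneg (u : ι → ℝ) : 0 ≤ euclNorm u := Real.sqrt_nonneg _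

lemma euclNorm_sq (u : ι → ℝ) : euclNorm u ^ 2 = ∑ i, u i ^ 2 :=
  Real.sq_sqrt (Finset.sum_nonneg fun _ _ => sq_nonneg _)

lemma sq_le_euclNorm_sq (u : ι → ℝ) (i : ι) : u i ^ 2 ≤ euclNorm u ^ 2 := by
  rw [euclNorm_sq]
  exact Finset.single_le_sum (f := fun i => u i ^ 2) (fun _ _ => sq_nonneg _) (Finset.mem_univ i)

lemma euclNorm_eq_norm_toLp (u : ι → ℝ) : euclNorm u = ‖WithLp.toLp 2 u‖ := by
  simp [EuclideanSpace.norm_eq, euclNorm]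

lemma euclNorm_add_le (u v : ι → ℝ) : euclNorm (u + v) ≤ euclNorm u + euclNorm v := by
  simpa only [euclNorm_eq_norm_toLp, WithLp.toLp_add] using norm_add_le _ _

lemma abs_sum_mul_le_euclNorm_mul (u v : ι → ℝ) :
    |∑ i, u i * v i| ≤ euclNorm u * euclNorm v := by
  rw [euclNorm, euclNorm, ← Real.sqrt_mul (Finset.sum_nonneg fun _ _ => sq_nonneg _)]
  exact Real.abs_le_sqrt (Finset.sum_mul_sq_le_sq_mul_sq _ u v)

lemma euclNorm_mulVec_le (A : Matrix κ ι ℝ) {b : ℝ} (hb : 0 ≤ b) (hA : ∀ k j, |A k j| ≤ b)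
    (x : ι → ℝ) :
    euclNorm (A *ᵥ x) ≤ Real.sqrt (Fintype.card κ * Fintype.card ι) * b * euclNorm x := by
  have hrow : ∀ k, (A *ᵥ x) k ^ 2 ≤ Fintype.card ι * b ^ 2 * euclNorm x ^ 2 := fun k =>
    calc (A *ᵥ x) k ^ 2 ≤ (∑ j, A k j ^ 2) * ∑ j, x j ^ 2 :=
          Finset.sum_mul_sq_le_sq_mul_sq _ (A k) x
      _ ≤ (∑ _j : ι, b ^ 2) * euclNorm x ^ 2 := by
          rw [euclNorm_sq]
          refine mul_le_mul_of_nonneg_right (Finset.sum_le_sum fun j _ => ?_) (by positivity)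
          exact sq_le_sq' (neg_le_of_abs_le (hA k j)) (le_of_abs_le (hA k j))
      _ = Fintype.card ι * b ^ 2 * euclNorm x ^ 2 := by simp
  rw [euclNorm, Real.sqrt_le_iff]
  refine ⟨mul_nonneg (mul_nonneg (Real.sqrt_nonneg _) hb) (euclNorm_nonneg x), ?_⟩
  calc ∑ k, (A *ᵥ x) k ^ 2 ≤ ∑ _k : κ, Fintype.card ι * b ^ 2 * euclNorm x ^ 2 :=
        Finset.sum_le_sum fun k _ => hrow k
    _ = _ := by
        rw [mul_pow, mul_pow, Real.sq_sqrt (by positivity)]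
        simp only [Finset.sum_const, Finset.card_univ, nsmul_eq_mul]
        ring

end EuclNorm

lemma add_mul_le_sqrt_one_add_sq_mul_sqrt (a b L : ℝ) :
    a + L * b ≤ Real.sqrt (1 + L ^ 2) * Real.sqrt (a ^ 2 + b ^ 2) := by
  rw [← Real.sqrt_mul (by positivity)]
  exact (le_abs_self _).trans (Real.abs_le_sqrt (by nlinarith [sq_nonneg (L * a - b)]))

section SigmaMin

variable {K m : ℕ}

lemma sigmaMin_nonneg (A : Matrix (Fin K) (Fin m) ℝ) : 0 ≤ sigmaMin A :=
  Real.iInf_nonneg fun _ => euclNorm_nonneg _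

lemma sigmaMin_le_euclNorm_mulVec (A : Matrix (Fin K) (Fin m) ℝ) {x : Fin m → ℝ}
    (hx : euclNorm x = 1) : sigmaMin A ≤ euclNorm (A *ᵥ x) :=
  ciInf_le (f := fun y : {y : Fin m → ℝ // euclNorm y = 1} => euclNorm (A *ᵥ y))
    ⟨0, Set.forall_mem_range.2 fun _ => euclNorm_nonneg _⟩ ⟨x, hx⟩

lemma sigmaMin_of_zero_rows (A : Matrix (Fin 0) (Fin m) ℝ) : sigmaMin A = 0 := by
  simp [sigmaMin, euclNorm]

lemma sigmaMin_le_add {A A' : Matrix (Fin K) (Fin m) ℝ} {ε : ℝ} (hε : 0 ≤ ε)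
    (h : ∀ x, euclNorm ((A - A') *ᵥ x) ≤ ε * euclNorm x) : sigmaMin A ≤ sigmaMin A' + ε := by
  cases isEmpty_or_nonempty {x : Fin m → ℝ // euclNorm x = 1}
  · simpa [sigmaMin, Real.iInf_of_isEmpty] using hε
  rw [← sub_le_iff_le_add]
  refine le_ciInf fun ⟨x, hx⟩ => sub_le_iff_le_add.2 ?_
  calc sigmaMin A ≤ euclNorm (A' *ᵥ x + (A - A') *ᵥ x) := by
        rw [sub_mulVec, add_sub_cancel]; exact sigmaMin_le_euclNorm_mulVec A hx
    _ ≤ euclNorm (A' *ᵥ x) + ε := by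
        grw [euclNorm_add_le, h x, hx, mul_one]

end SigmaMin

lemma abs_mul_sub_mul_le_of_bounded_lipschitz {f : ℝ → ℝ} {B : ℝ} (hbd : ∀ s, |f s| ≤ B)
    (hlip : ∀ s s', |f s - f s'| ≤ B * |s - s'|) (a a₀ s s₀ : ℝ) :
    |a * f s - a₀ * f s₀| ≤ B * (|a - a₀| + |a₀| * |s - s₀|) :=
  calc |a * f s - a₀ * f s₀| = |(a - a₀) * f s + a₀ * (f s - f s₀)| := by ring_nf
    _ ≤ |a - a₀| * |f s| + |a₀| * |f s - f s₀| := by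
        simpa only [abs_mul] using abs_add_le ((a - a₀) * f s) (a₀ * (f s - f s₀))
    _ ≤ |a - a₀| * B + |a₀| * (B * |s - s₀|) := by gcongr <;> simp only [hbd, hlip]
    _ = B * (|a - a₀| + |a₀| * |s - s₀|) := by ring

lemma abs_neuron_sub_le {ι : Type*} [Fintype ι] {f : ℝ → ℝ} {B : ℝ} (hbd : ∀ s, |f s| ≤ B)
    (hlip : ∀ s s', |f s - f s'| ≤ B * |s - s'|) (a a₀ : ℝ) (v v₀ x : ι → ℝ) {L : ℝ}
    (hL : euclNorm x * |a₀| ≤ L) :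
    |a * f (∑ l, v l * x l) - a₀ * f (∑ l, v₀ l * x l)| ≤
      Real.sqrt (1 + L ^ 2) * B * Real.sqrt ((a - a₀) ^ 2 + euclNorm (v - v₀) ^ 2) := by
  have hB : 0 ≤ B := (abs_nonneg _).trans (hbd 0)
  have hdot : |∑ l, v l * x l - ∑ l, v₀ l * x l| ≤ euclNorm (v - v₀) * euclNorm x := by
    simpa only [← Finset.sum_sub_distrib, ← sub_mul, Pi.sub_apply]
      using abs_sum_mul_le_euclNorm_mul (v - v₀) x
  have hinner : |a₀| * |∑ l, v l * x l - ∑ l, v₀ l * x l| ≤ L * euclNorm (v - v₀) :=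
    calc _ ≤ |a₀| * (euclNorm (v - v₀) * euclNorm x) := by gcongr
      _ = (euclNorm x * |a₀|) * euclNorm (v - v₀) := by ring
      _ ≤ L * euclNorm (v - v₀) := by gcongr; exact euclNorm_nonneg _
  calc _ ≤ B * (|a - a₀| + |a₀| * |∑ l, v l * x l - ∑ l, v₀ l * x l|) :=
        abs_mul_sub_mul_le_of_bounded_lipschitz hbd hlip _ _ _ _
    _ ≤ B * (|a - a₀| + L * euclNorm (v - v₀)) := by gcongr
    _ ≤ B * (Real.sqrt (1 + L ^ 2) * Real.sqrt (|a - a₀| ^ 2 + euclNorm (v - v₀) ^ 2)) := by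
        gcongr; exact add_mul_le_sqrt_one_add_sq_mul_sqrt _ _ _
    _ = _ := by rw [sq_abs]; ring

def paramDist {κ ν μ : Type*} [Fintype κ] [Fintype ν] [Fintype μ] (α α₀ : κ → ℝ)
    (V V₀ : ν → μ → ℝ) : ℝ :=
  Real.sqrt (euclNorm (α - α₀) ^ 2 + ∑ i, ∑ l, (V i l - V₀ i l) ^ 2)

lemma sqrt_sq_add_euclNorm_sq_le_paramDist {κ ν μ : Type*} [Fintype κ] [Fintype ν] [Fintype μ]
    (α α₀ : κ → ℝ) (V V₀ : ν → μ → ℝ) (k : κ) (i : ν) :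
    Real.sqrt ((α k - α₀ k) ^ 2 + euclNorm (V i - V₀ i) ^ 2) ≤ paramDist α α₀ V V₀ := by
  refine Real.sqrt_le_sqrt (add_le_add (sq_le_euclNorm_sq (α - α₀) k) ?_)
  rw [euclNorm_sq]
  exact Finset.single_le_sum (f := fun i => ∑ l, (V i l - V₀ i l) ^ 2)
    (fun _ _ => Finset.sum_nonneg fun _ _ => sq_nonneg _) (Finset.mem_univ i)

lemma abs_featMat_sub_apply_le {N d K m : ℕ} {φ : Fin K → ℝ → ℝ} {B : ℝ} {k : Fin K}
    (hbd : ∀ s, |φ k s| ≤ B) (hlip : ∀ s s', |φ k s - φ k s'| ≤ B * |s - s'|)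
    (c : Fin N → ℝ) (xt : Fin m → Fin (d + 1) → ℝ) (α α₀ : Fin K → ℝ)
    (V V₀ : Fin N → Fin (d + 1) → ℝ) (j : Fin m) {L : ℝ} (hL : euclNorm (xt j) * |α₀ k| ≤ L) :
    |featMat φ c xt α V k j - featMat φ c xt α₀ V₀ k j| ≤
      (∑ i, |c i|) * (Real.sqrt (1 + L ^ 2) * B * paramDist α α₀ V V₀) := by
  have hB : 0 ≤ B := (abs_nonneg _).trans (hbd 0)
  calc _ = |∑ i, c i * (α k * φ k (∑ l, V i l * xt j l) - α₀ k * φ k (∑ l, V₀ i l * xt j l))| := by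
        simp only [featMat, Matrix.of_apply, ← Finset.sum_sub_distrib, mul_sub, mul_assoc]
    _ ≤ ∑ i, |c i| *
          |α k * φ k (∑ l, V i l * xt j l) - α₀ k * φ k (∑ l, V₀ i l * xt j l)| := by
        simpa only [abs_mul] using Finset.abs_sum_le_sum_abs
          (fun i => c i * (α k * φ k (∑ l, V i l * xt j l) - α₀ k * φ k (∑ l, V₀ i l * xt j l)))
          Finset.univ
    _ ≤ ∑ i, |c i| * (Real.sqrt (1 + L ^ 2) * B * paramDist α α₀ V V₀) := by
        gcongr with i
        exact (abs_neuron_sub_le hbd hlip _ _ _ _ _ hL).trans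
          (by gcongr; exact sqrt_sq_add_euclNorm_sq_le_paramDist α α₀ V V₀ k i)
    _ = _ := (Finset.sum_mul _ _ _).symm

lemma euclNorm_featMat_sub_mulVec_le {N d K m : ℕ} {φ : Fin K → ℝ → ℝ} {B : ℝ} (hB : 0 ≤ B)
    (hbd : ∀ k s, |φ k s| ≤ B) (hlip : ∀ k s s', |φ k s - φ k s'| ≤ B * |s - s'|)
    (c : Fin N → ℝ) (xt : Fin m → Fin (d + 1) → ℝ) (α α₀ : Fin K → ℝ)
    (V V₀ : Fin N → Fin (d + 1) → ℝ) {L : ℝ} (hL : ∀ k j, euclNorm (xt j) * |α₀ k| ≤ L)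
    (x : Fin m → ℝ) :
    euclNorm ((featMat φ c xt α₀ V₀ - featMat φ c xt α V) *ᵥ x) ≤
      Real.sqrt (1 + L ^ 2) * (∑ i, |c i|) * B * Real.sqrt ((K : ℝ) * m) *
        paramDist α α₀ V V₀ * euclNorm x := by
  have hentry : ∀ k j, |(featMat φ c xt α₀ V₀ - featMat φ c xt α V) k j| ≤
      (∑ i, |c i|) * (Real.sqrt (1 + L ^ 2) * B * paramDist α α₀ V V₀) := fun k j => by
    rw [Matrix.sub_apply, abs_sub_comm]
    exact abs_featMat_sub_apply_le (hbd k) (hlip k) c xt α α₀ V V₀ j (hL k j)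
  have hdist : 0 ≤ paramDist α α₀ V V₀ := Real.sqrt_nonneg _
  refine (euclNorm_mulVec_le _ (by positivity) hentry x).trans_eq ?_
  rw [Fintype.card_fin, Fintype.card_fin]
  ring

lemma mul_le_half_of_le_div_two_mul {C δ lam : ℝ} (hC : 0 ≤ C) (hlam : 0 ≤ lam)
    (hδ : δ ≤ lam / (2 * C)) : C * δ ≤ lam / 2 := by
  obtain rfl | hCpos := hC.eq_or_lt
  · rw [zero_mul]; positivity
  calc C * δ ≤ C * (lam / (2 * C)) := mul_le_mul_of_nonneg_left hδ hC
    _ = lam / 2 := by field_simp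

theorem sigmaMin_stability_general {N d K m : ℕ} (B : ℝ) (φ : Fin K → ℝ → ℝ)
    (hbd : ∀ k (s : ℝ), |φ k s| ≤ B)
    (hlip : ∀ k (s s' : ℝ), |φ k s - φ k s'| ≤ B * |s - s'|)
    (c : Fin N → ℝ) (xt : Fin m → Fin (d + 1) → ℝ) (T : ℝ)
    (αt : ℝ → Fin K → ℝ) (Vt : ℝ → Fin N → Fin (d + 1) → ℝ)
    (C lam0 : ℝ)
    (hC : C = Real.sqrt (1 + ((⨆ j : Fin m, euclNorm (xt j)) * (⨆ k : Fin K, |αt 0 k|)) ^ 2) *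
        (∑ i, |c i|) * B * Real.sqrt ((K : ℝ) * m))
    (hlam0 : lam0 = sigmaMin (featMat φ c xt (αt 0) (Vt 0)))
    (hpath : ∀ t ∈ Set.Icc (0 : ℝ) T,
      Real.sqrt (euclNorm (αt t - αt 0) ^ 2 + ∑ i, ∑ l, (Vt t i l - Vt 0 i l) ^ 2) ≤
        lam0 / (2 * C)) :
    ∀ t ∈ Set.Icc (0 : ℝ) T, lam0 / 2 ≤ sigmaMin (featMat φ c xt (αt t) (Vt t)) := by
  intro t ht
  obtain rfl | hK := K.eq_zero_or_pos
  · simp [hlam0, sigmaMin_of_zero_rows]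
  have hB : 0 ≤ B := (abs_nonneg _).trans (hbd ⟨0, hK⟩ 0)
  have hL : ∀ k j, euclNorm (xt j) * |αt 0 k| ≤
      (⨆ j : Fin m, euclNorm (xt j)) * ⨆ k : Fin K, |αt 0 k| := fun k j =>
    have hxj := le_ciSup (Finite.bddAbove_range fun j => euclNorm (xt j)) j
    mul_le_mul hxj (le_ciSup (Finite.bddAbove_range fun k => |αt 0 k|) k) (abs_nonneg _)
      ((euclNorm_nonneg _).trans hxj)
  have hC_nonneg : 0 ≤ C := by rw [hC]; positivity
  have hσ : sigmaMin (featMat φ c xt (αt 0) (Vt 0)) ≤ sigmaMin (featMat φ c xt (αt t) (Vt t)) +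
      C * paramDist (αt t) (αt 0) (Vt t) (Vt 0) :=
    sigmaMin_le_add (mul_nonneg hC_nonneg (Real.sqrt_nonneg _)) fun x =>
      hC ▸ euclNorm_featMat_sub_mulVec_le hB hbd hlip c xt (αt t) (αt 0) (Vt t) (Vt 0) hL x
  have hCδ : C * paramDist (αt t) (αt 0) (Vt t) (Vt 0) ≤ lam0 / 2 :=
    mul_le_half_of_le_div_two_mul hC_nonneg (hlam0 ▸ sigmaMin_nonneg _) (hpath t ht)
  linarith

/-- stability of the least singular value along a trajectory.  With
`C = √(1 + (max_j ‖x̃_j‖ ‖α(0)‖_∞)²) ‖c‖₁ B √(Km)` and `lam0 = σ_min(A(Θ(0)))`, if a parameter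
path `Θ(t) = (α(t), V(t))` stays within Frobenius distance `lam0/(2C)` of `Θ(0)` on `[0, T]`,
then `σ_min(A(Θ(t))) ≥ lam0/2` on `[0, T]`. -/
theorem sigmaMin_stability {N d K m : ℕ} (hKm : m ≤ K) (B : ℝ) (φ : Fin K → ℝ → ℝ)
    (hbd : ∀ k (s : ℝ), |φ k s| ≤ B)
    (hlip : ∀ k (s s' : ℝ), |φ k s - φ k s'| ≤ B * |s - s'|)
    (c : Fin N → ℝ) (xt : Fin m → Fin (d + 1) → ℝ) (T : ℝ)
    (αt : ℝ → Fin K → ℝ) (Vt : ℝ → Fin N → Fin (d + 1) → ℝ)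
    (C lam0 : ℝ)
    (hC : C = Real.sqrt (1 + ((⨆ j : Fin m, euclNorm (xt j)) * (⨆ k : Fin K, |αt 0 k|)) ^ 2) *
        (∑ i, |c i|) * B * Real.sqrt ((K : ℝ) * m))
    (hlam0 : lam0 = sigmaMin (featMat φ c xt (αt 0) (Vt 0)))
    (hpath : ∀ t ∈ Set.Icc (0 : ℝ) T,
      Real.sqrt (euclNorm (αt t - αt 0) ^ 2 + ∑ i, ∑ l, (Vt t i l - Vt 0 i l) ^ 2) ≤
        lam0 / (2 * C)) :
    ∀ t ∈ Set.Icc (0 : ℝ) T, lam0 / 2 ≤ sigmaMin (featMat φ c xt (αt t) (Vt t)) :=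
  sigmaMin_stability_general B φ hbd hlip c xt T αt Vt C lam0 hC hlam0 hpath
end
end

section
/- Initial loss-derivative comparison between Kronecker and feed-forward networks: let φ_1, …, φ_K ∈ C¹(ℝ) with K ≥ m. Let the FFN have parameters Θ_FF(0) = (c, V) and the KNN have parameters Θ_K(0) = (c, V, α(0), ω(0)) with α(0) = (1, 0, …, 0) and ω(0) = (1, …, 1), so that u^K(·; Θ_K(0)) = u^FF(·; Θ_FF(0)) and the residual vectors at t = 0 coincide: Res(X)(0) = (u(x_j) − y_j)_{j=1}^m. Let Θ_FF(t), Θ_K(t) solve the respective gradient flows of the square loss. Then at t = 0, d/dt L^K(0) ≤ d/dt L^FF(0) − ‖A(0) · Res(X)(0)‖² ≤ d/dt L^FF(0) ≤ 0, where A(0) is the K×m matrix with entries A_{kj} = Σ_{i=1}^N c_i φ_k(v_iᵀ x̃_j). In particular, if A(0) has full rank m and Res(X)(0) ≠ 0, then d/dt L^K(0) < d/dt L^FF(0). -/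
open scoped BigOperators

noncomputable section

/-- Parameters `(c, V)` of a two-layer feed-forward network, as a Euclidean space. -/
abbrev FFParams (N d : ℕ) : Type :=
  EuclideanSpace ℝ (Fin N ⊕ Fin N × Fin (d + 1))

/-- Parameters `(c, V, α, ω)` of a two-layer Kronecker network, as a Euclidean space. -/
abbrev KParams (N d K : ℕ) : Type :=
  EuclideanSpace ℝ ((Fin N ⊕ Fin N × Fin (d + 1)) ⊕ (Fin K ⊕ Fin K))

/-- The two-layer feed-forward network `u^FF(x; θ) = Σ_i c_i φ₁(v_iᵀ x̃)`. -/
def uFF {N d : ℕ} (φ1 : ℝ → ℝ) (θ : FFParams N d) (x : Fin (d + 1) → ℝ) : ℝ :=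
  ∑ i, θ (Sum.inl i) * φ1 (∑ j, θ (Sum.inr (i, j)) * x j)

/-- The two-layer Kronecker network `u^K(x; Θ) = Σ_i c_i Σ_k α_k φ_k(ω_k v_iᵀ x̃)`. -/
def uK {N d K : ℕ} (φ : Fin K → ℝ → ℝ) (θ : KParams N d K) (x : Fin (d + 1) → ℝ) : ℝ :=
  ∑ i, θ (Sum.inl (Sum.inl i)) *
    ∑ k, θ (Sum.inr (Sum.inl k)) *
      φ k (θ (Sum.inr (Sum.inr k)) * ∑ j, θ (Sum.inl (Sum.inr (i, j))) * x j)

/-- The square loss of the feed-forward network. -/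
def sqLossFF {N d m : ℕ} (φ1 : ℝ → ℝ) (xt : Fin m → Fin (d + 1) → ℝ) (y : Fin m → ℝ)
    (θ : FFParams N d) : ℝ :=
  (1 / 2 : ℝ) * ∑ j, (uFF φ1 θ (xt j) - y j) ^ 2

/-- The square loss of the Kronecker network. -/
def sqLossK {N d K m : ℕ} (φ : Fin K → ℝ → ℝ) (xt : Fin m → Fin (d + 1) → ℝ)
    (y : Fin m → ℝ) (θ : KParams N d K) : ℝ :=
  (1 / 2 : ℝ) * ∑ j, (uK φ θ (xt j) - y j) ^ 2


/-! Along a gradient flow the loss decreases at rate `‖∇L‖²`. Embedding FFN parameters `θ` as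
KNN parameters `(θ, α = e₁, ω = 1)` turns `u^K` into `u^FF`, so the `(c, V)`-components of
`∇L^K` at the embedded point are exactly `∇L^FF`. The `α`-components come on top: `u^K` is
linear in `α`, so `∂L^K/∂α_k = (A · Res)_k`; the `ω`-components only add further squares.
Full column rank of `A` makes `A · Res ≠ 0` as soon as `Res ≠ 0`. -/

open Matrix

theorem hasDerivAt_comp_of_gradient_flow {E : Type*} [NormedAddCommGroup E]
    [InnerProductSpace ℝ E] [CompleteSpace E] {L : E → ℝ} {Θ : ℝ → E} {t : ℝ}
    (hL : DifferentiableAt ℝ L (Θ t)) (hΘ : HasDerivAt Θ (-(gradient L (Θ t))) t) :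
    HasDerivAt (fun s => L (Θ s)) (-‖gradient L (Θ t)‖ ^ 2) t := by
  have h := hL.hasGradientAt.hasFDerivAt.comp_hasDerivAt t hΘ
  rwa [map_neg, InnerProductSpace.toDual_apply_apply, real_inner_self_eq_norm_sq] at h

theorem EuclideanSpace.hasDerivAt_add_smul_single {ι : Type*} [Fintype ι] [DecidableEq ι]
    {L : EuclideanSpace ℝ ι → ℝ} {θ : EuclideanSpace ℝ ι} (hL : DifferentiableAt ℝ L θ) (a : ι) :
    HasDerivAt (fun s : ℝ => L (θ + s • EuclideanSpace.single a 1)) (gradient L θ a) 0 := by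
  have hline : HasDerivAt (fun s : ℝ => θ + s • EuclideanSpace.single a (1 : ℝ))
      (EuclideanSpace.single a 1) 0 := by
    simpa using ((hasDerivAt_id (0 : ℝ)).smul_const (EuclideanSpace.single a (1 : ℝ))).const_add θ
  have h := hL.hasGradientAt.hasFDerivAt.comp_hasDerivAt_of_eq 0 hline (by simp)
  rwa [InnerProductSpace.toDual_apply_apply, EuclideanSpace.inner_single_right, one_mul,
    conj_trivial] at h

theorem hasDerivAt_half_sum_sq_add_mul {ι : Type*} [Fintype ι] (r a : ι → ℝ) :
    HasDerivAt (fun s : ℝ => 1 / 2 * ∑ j, (r j + s * a j) ^ 2) (∑ j, a j * r j) 0 := by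
  have h : ∀ j, HasDerivAt (fun s : ℝ => (r j + s * a j) ^ 2) (2 * r j * a j) 0 :=
    fun j => by simpa using (((hasDerivAt_id (0 : ℝ)).mul_const (a j)).const_add (r j)).fun_pow 2
  have hsum := (HasDerivAt.fun_sum (u := Finset.univ) fun j _ => h j).const_mul (1 / 2 : ℝ)
  refine hsum.congr_deriv ?_
  rw [Finset.mul_sum]
  exact Finset.sum_congr rfl fun j _ => by ring

theorem Matrix.mulVec_ne_zero_of_rank_eq_card {R m n : Type*} [Field R] [Fintype n]
    {A : Matrix m n R} (hA : A.rank = Fintype.card n) {v : n → R} (hv : v ≠ 0) : A *ᵥ v ≠ 0 := by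
  have hker : Module.finrank R (LinearMap.ker A.mulVecLin) = 0 := by
    have := LinearMap.finrank_range_add_finrank_ker A.mulVecLin
    rw [Module.finrank_fintype_fun_eq_card] at this
    have : A.rank = Module.finrank R (LinearMap.range A.mulVecLin) := rfl
    omega
  exact fun h => hv (Matrix.ker_mulVecLin_eq_bot_iff.mp (Submodule.finrank_eq_zero.mp hker) v h)

section Networks

variable {N d K m : ℕ}

def toKParams (θ : FFParams N d) : KParams N d K :=
  WithLp.toLp 2 (Sum.elim θ.ofLp (Sum.elim (fun k => if (k : ℕ) = 0 then 1 else 0) fun _ => 1))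

@[simp]
theorem toKParams_inl (θ : FFParams N d) (a : Fin N ⊕ Fin N × Fin (d + 1)) :
    toKParams (K := K) θ (Sum.inl a) = θ a := rfl

@[simp]
theorem toKParams_inr_inl (θ : FFParams N d) (k : Fin K) :
    toKParams θ (Sum.inr (Sum.inl k)) = if (k : ℕ) = 0 then 1 else 0 := rfl

@[simp]
theorem toKParams_inr_inr (θ : FFParams N d) (k : Fin K) :
    toKParams θ (Sum.inr (Sum.inr k)) = 1 := rfl

theorem toKParams_add_smul_single (θ : FFParams N d) (s : ℝ) (a : Fin N ⊕ Fin N × Fin (d + 1)) :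
    toKParams (K := K) (θ + s • EuclideanSpace.single a 1) =
      toKParams θ + s • EuclideanSpace.single (Sum.inl a) 1 := by
  ext (b | k | k) <;> simp [PiLp.single_apply]

theorem uK_toKParams (hK : 0 < K) (φ : Fin K → ℝ → ℝ) (θ : FFParams N d)
    (x : Fin (d + 1) → ℝ) : uK φ (toKParams θ) x = uFF (φ ⟨0, hK⟩) θ x := by
  have hk0 (k : Fin K) : (k : ℕ) = 0 ↔ k = ⟨0, hK⟩ := by rw [Fin.ext_iff]
  simp [uK, uFF, hk0]

theorem sqLossK_toKParams (hK : 0 < K) (φ : Fin K → ℝ → ℝ) (xt : Fin m → Fin (d + 1) → ℝ)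
    (y : Fin m → ℝ) (θ : FFParams N d) :
    sqLossK φ xt y (toKParams θ) = sqLossFF (φ ⟨0, hK⟩) xt y θ := by
  simp only [sqLossK, sqLossFF, uK_toKParams hK]

theorem uK_add_smul_single_alpha (φ : Fin K → ℝ → ℝ) (θ : KParams N d K) (s : ℝ) (k : Fin K)
    (x : Fin (d + 1) → ℝ) :
    uK φ (θ + s • EuclideanSpace.single (Sum.inr (Sum.inl k)) 1) x = uK φ θ x +
      s * ∑ i, θ (Sum.inl (Sum.inl i)) *
        φ k (θ (Sum.inr (Sum.inr k)) * ∑ l, θ (Sum.inl (Sum.inr (i, l))) * x l) := by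
  simp [uK, PiLp.single_apply, add_mul, mul_add, Finset.sum_add_distrib, Finset.mul_sum,
    mul_left_comm]

def featureMatrix (φ : Fin K → ℝ → ℝ) (θ : FFParams N d) (xt : Fin m → Fin (d + 1) → ℝ) :
    Matrix (Fin K) (Fin m) ℝ :=
  Matrix.of fun k j => ∑ i, θ (Sum.inl i) * φ k (∑ l, θ (Sum.inr (i, l)) * xt j l)

def residualFF (φ1 : ℝ → ℝ) (θ : FFParams N d) (xt : Fin m → Fin (d + 1) → ℝ) (y : Fin m → ℝ) :
    Fin m → ℝ :=
  fun j => uFF φ1 θ (xt j) - y j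

variable (xt : Fin m → Fin (d + 1) → ℝ) (y : Fin m → ℝ)

theorem differentiable_sqLossFF {φ1 : ℝ → ℝ} (hφ1 : Differentiable ℝ φ1) :
    Differentiable ℝ (sqLossFF (N := N) φ1 xt y) := by
  unfold sqLossFF uFF
  fun_prop

theorem differentiable_sqLossK {φ : Fin K → ℝ → ℝ} (hφ : ∀ k, Differentiable ℝ (φ k)) :
    Differentiable ℝ (sqLossK (N := N) φ xt y) := by
  unfold sqLossK uK
  fun_prop

theorem gradient_sqLossK_toKParams_inl (hK : 0 < K) {φ : Fin K → ℝ → ℝ}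
    (hφ : ∀ k, Differentiable ℝ (φ k)) (θ : FFParams N d) (a : Fin N ⊕ Fin N × Fin (d + 1)) :
    gradient (sqLossK φ xt y) (toKParams θ) (Sum.inl a) =
      gradient (sqLossFF (φ ⟨0, hK⟩) xt y) θ a := by
  have hKline := EuclideanSpace.hasDerivAt_add_smul_single
    ((differentiable_sqLossK xt y hφ).differentiableAt (x := toKParams θ)) (Sum.inl a)
  have hFFline := EuclideanSpace.hasDerivAt_add_smul_single
    ((differentiable_sqLossFF xt y (hφ ⟨0, hK⟩)).differentiableAt (x := θ)) a
  simp only [← toKParams_add_smul_single, sqLossK_toKParams hK] at hKline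
  exact hKline.unique hFFline

theorem gradient_sqLossK_alpha {φ : Fin K → ℝ → ℝ} (hφ : ∀ k, Differentiable ℝ (φ k))
    (θ : KParams N d K) (k : Fin K) :
    gradient (sqLossK φ xt y) θ (Sum.inr (Sum.inl k)) =
      ∑ j, (∑ i, θ (Sum.inl (Sum.inl i)) *
          φ k (θ (Sum.inr (Sum.inr k)) * ∑ l, θ (Sum.inl (Sum.inr (i, l))) * xt j l)) *
        (uK φ θ (xt j) - y j) := by
  have hline := EuclideanSpace.hasDerivAt_add_smul_single
    ((differentiable_sqLossK xt y hφ).differentiableAt (x := θ)) (Sum.inr (Sum.inl k))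
  refine hline.unique ((hasDerivAt_half_sum_sq_add_mul _ _).congr_of_eventuallyEq
    (Filter.Eventually.of_forall fun s => ?_))
  simp only [sqLossK, uK_add_smul_single_alpha]
  congr 1
  exact Finset.sum_congr rfl fun j _ => by ring

theorem norm_sq_gradient_sqLossFF_add_le (hK : 0 < K) {φ : Fin K → ℝ → ℝ}
    (hφ : ∀ k, Differentiable ℝ (φ k)) (θ : FFParams N d) :
    ‖gradient (sqLossFF (φ ⟨0, hK⟩) xt y) θ‖ ^ 2 +
        ∑ k, ((featureMatrix φ θ xt *ᵥ residualFF (φ ⟨0, hK⟩) θ xt y) k) ^ 2 ≤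
      ‖gradient (sqLossK φ xt y) (toKParams θ)‖ ^ 2 := by
  simp only [EuclideanSpace.real_norm_sq_eq, Fintype.sum_sum_type,
    gradient_sqLossK_toKParams_inl xt y hK hφ, gradient_sqLossK_alpha xt y hφ,
    toKParams_inl, toKParams_inr_inr, one_mul, uK_toKParams hK]
  have hω : 0 ≤ ∑ k : Fin K, (gradient (sqLossK φ xt y) (toKParams θ) (Sum.inr (Sum.inr k))) ^ 2 :=
    Finset.sum_nonneg fun k _ => sq_nonneg _
  simp only [mulVec, dotProduct, featureMatrix, residualFF, Matrix.of_apply]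
  linarith

end Networks

theorem initial_loss_derivative_comparison_general {N d K m : ℕ} (hK : 0 < K)
    (φ : Fin K → ℝ → ℝ) (hφ : ∀ k, ContDiff ℝ 1 (φ k))
    (c : Fin N → ℝ) (V : Fin N → Fin (d + 1) → ℝ)
    (xt : Fin m → Fin (d + 1) → ℝ) (y : Fin m → ℝ)
    (ΘFF : ℝ → FFParams N d) (ΘK : ℝ → KParams N d K)
    (hFFc : ∀ i, ΘFF 0 (Sum.inl i) = c i)
    (hFFv : ∀ i j, ΘFF 0 (Sum.inr (i, j)) = V i j)
    (hKc : ∀ i, ΘK 0 (Sum.inl (Sum.inl i)) = c i)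
    (hKv : ∀ i j, ΘK 0 (Sum.inl (Sum.inr (i, j))) = V i j)
    (hKα : ∀ k : Fin K, ΘK 0 (Sum.inr (Sum.inl k)) = if (k : ℕ) = 0 then 1 else 0)
    (hKω : ∀ k : Fin K, ΘK 0 (Sum.inr (Sum.inr k)) = 1)
    (hflowFF : ∀ t, HasDerivAt ΘFF
      (-(gradient (sqLossFF (φ ⟨0, hK⟩) xt y) (ΘFF t))) t)
    (hflowK : ∀ t, HasDerivAt ΘK (-(gradient (sqLossK φ xt y) (ΘK t))) t) :
    (deriv (fun t => sqLossK φ xt y (ΘK t)) 0 ≤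
        deriv (fun t => sqLossFF (φ ⟨0, hK⟩) xt y (ΘFF t)) 0 -
          ∑ k, (∑ j, (∑ i, c i * φ k (∑ l, V i l * xt j l)) *
            (uFF (φ ⟨0, hK⟩) (ΘFF 0) (xt j) - y j)) ^ 2) ∧
    deriv (fun t => sqLossFF (φ ⟨0, hK⟩) xt y (ΘFF t)) 0 ≤ 0 ∧
    ((Matrix.rank (Matrix.of fun (k : Fin K) (j : Fin m) =>
          ∑ i, c i * φ k (∑ l, V i l * xt j l)) = m ∧
        (fun j : Fin m => uFF (φ ⟨0, hK⟩) (ΘFF 0) (xt j) - y j) ≠ 0) →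
      deriv (fun t => sqLossK φ xt y (ΘK t)) 0 <
        deriv (fun t => sqLossFF (φ ⟨0, hK⟩) xt y (ΘFF t)) 0) := by
  have hφ' : ∀ k, Differentiable ℝ (φ k) := fun k => (hφ k).differentiable one_ne_zero
  have hΘK : ΘK 0 = toKParams (ΘFF 0) := by
    ext ((i | ⟨i, j⟩) | k | k) <;> simp [hFFc, hFFv, hKc, hKv, hKα, hKω]
  have hdK := (hasDerivAt_comp_of_gradient_flow
    ((differentiable_sqLossK xt y hφ').differentiableAt) (hflowK 0)).deriv
  have hdFF := (hasDerivAt_comp_of_gradient_flow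
    ((differentiable_sqLossFF xt y (hφ' ⟨0, hK⟩)).differentiableAt) (hflowFF 0)).deriv
  have hle := norm_sq_gradient_sqLossFF_add_le xt y hK hφ' (ΘFF 0)
  have hA : featureMatrix φ (ΘFF 0) xt =
      Matrix.of fun k j => ∑ i, c i * φ k (∑ l, V i l * xt j l) := by
    ext k j
    simp [featureMatrix, hFFc, hFFv]
  have hAR : ∀ k, (featureMatrix φ (ΘFF 0) xt *ᵥ residualFF (φ ⟨0, hK⟩) (ΘFF 0) xt y) k =
      ∑ j, (∑ i, c i * φ k (∑ l, V i l * xt j l)) * (uFF (φ ⟨0, hK⟩) (ΘFF 0) (xt j) - y j) := by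
    intro k
    rw [hA]
    rfl
  simp only [hAR, ← hΘK] at hle
  rw [hdK, hdFF]
  refine ⟨by linarith, neg_nonpos.mpr (sq_nonneg _), ?_⟩
  rintro ⟨hrank, hres⟩
  have hAR_ne := Matrix.mulVec_ne_zero_of_rank_eq_card
    (hA ▸ hrank.trans (Fintype.card_fin m).symm) hres
  obtain ⟨k, hk⟩ := Function.ne_iff.mp hAR_ne
  have hpos :
      0 < ∑ k, ((featureMatrix φ (ΘFF 0) xt *ᵥ residualFF (φ ⟨0, hK⟩) (ΘFF 0) xt y) k) ^ 2 :=
    Finset.sum_pos' (fun k _ => sq_nonneg _) ⟨k, Finset.mem_univ k, sq_pos_of_ne_zero hk⟩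
  simp only [hAR] at hpos
  linarith

/-- initial loss-derivative comparison between the Kronecker and feed-forward
networks.  With common initialization `(c, V)`, `α(0) = (1, 0, …, 0)`, `ω(0) = (1, …, 1)` and
both parameter sets evolving by the gradient flows of their square losses,
`d/dt L^K(0) ≤ d/dt L^FF(0) − ‖A(0)·Res(0)‖² ≤ d/dt L^FF(0) ≤ 0`, where
`A(0)_{kj} = Σ_i c_i φ_k(v_iᵀ x̃_j)` and `Res(0)_j = u(x_j) − y_j`; and if `A(0)` has full
rank `m` and `Res(0) ≠ 0`, then `d/dt L^K(0) < d/dt L^FF(0)`. -/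
theorem initial_loss_derivative_comparison {N d K m : ℕ} (hK : 0 < K) (hKm : m ≤ K)
    (φ : Fin K → ℝ → ℝ) (hφ : ∀ k, ContDiff ℝ 1 (φ k))
    (c : Fin N → ℝ) (V : Fin N → Fin (d + 1) → ℝ)
    (xt : Fin m → Fin (d + 1) → ℝ) (y : Fin m → ℝ)
    (ΘFF : ℝ → FFParams N d) (ΘK : ℝ → KParams N d K)
    (hFFc : ∀ i, ΘFF 0 (Sum.inl i) = c i)
    (hFFv : ∀ i j, ΘFF 0 (Sum.inr (i, j)) = V i j)
    (hKc : ∀ i, ΘK 0 (Sum.inl (Sum.inl i)) = c i)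
    (hKv : ∀ i j, ΘK 0 (Sum.inl (Sum.inr (i, j))) = V i j)
    (hKα : ∀ k : Fin K, ΘK 0 (Sum.inr (Sum.inl k)) = if (k : ℕ) = 0 then 1 else 0)
    (hKω : ∀ k : Fin K, ΘK 0 (Sum.inr (Sum.inr k)) = 1)
    (hflowFF : ∀ t, HasDerivAt ΘFF
      (-(gradient (sqLossFF (φ ⟨0, hK⟩) xt y) (ΘFF t))) t)
    (hflowK : ∀ t, HasDerivAt ΘK (-(gradient (sqLossK φ xt y) (ΘK t))) t) :
    (deriv (fun t => sqLossK φ xt y (ΘK t)) 0 ≤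
        deriv (fun t => sqLossFF (φ ⟨0, hK⟩) xt y (ΘFF t)) 0 -
          ∑ k, (∑ j, (∑ i, c i * φ k (∑ l, V i l * xt j l)) *
            (uFF (φ ⟨0, hK⟩) (ΘFF 0) (xt j) - y j)) ^ 2) ∧
    deriv (fun t => sqLossFF (φ ⟨0, hK⟩) xt y (ΘFF t)) 0 ≤ 0 ∧
    ((Matrix.rank (Matrix.of fun (k : Fin K) (j : Fin m) =>
          ∑ i, c i * φ k (∑ l, V i l * xt j l)) = m ∧
        (fun j : Fin m => uFF (φ ⟨0, hK⟩) (ΘFF 0) (xt j) - y j) ≠ 0) →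
      deriv (fun t => sqLossK φ xt y (ΘK t)) 0 <
        deriv (fun t => sqLossFF (φ ⟨0, hK⟩) xt y (ΘFF t)) 0) :=
  initial_loss_derivative_comparison_general hK φ hφ c V xt y ΘFF ΘK hFFc hFFv hKc hKv hKα hKω
    hflowFF hflowK
end
end
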